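/- Let G ~ G_{n,p,d} be any d-dependent random graph distribution on n ≥ 2 vertices. Then the probability that G is not connected is at most Σ_{a=1}^{⌊n/2⌋} C(n,a)·(1−p)^{⌈a(n−a)/(d+1)⌉}. -/

import Mathlib

open MeasureTheory ProbabilityTheory Filter

abbrev EdgeIdx (n : ℕ) := {e : Sym2 (Fin n) // ¬ e.IsDiag}

structure DepRandomGraph (n : ℕ) (p : ℝ) (d : ℕ) where
  Ω : Type
  m : MeasurableSpace Ω
  μ : @MeasureTheory.Measure Ω m
  isProb : @MeasureTheory.IsProbabilityMeasure Ω m μ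
  X : EdgeIdx n → Ω → Bool
  meas : ∀ e, @Measurable Ω Bool m ⊤ (X e)
  probX : ∀ e, μ {ω | X e ω = true} = ENNReal.ofReal p
  D : SimpleGraph (EdgeIdx n)
  degBound : ∀ e, (D.neighborSet e).ncard ≤ d
  indep : ∀ e, @ProbabilityTheory.Indep Ω
      (MeasurableSpace.comap (X e) ⊤)
      (⨆ f ∈ {f : EdgeIdx n | f ≠ e ∧ ¬ D.Adj e f}, MeasurableSpace.comap (X f) ⊤)
      m μ

attribute [instance] DepRandomGraph.m DepRandomGraph.isProb

def DepRandomGraph.graph {n : ℕ} {p : ℝ} {d : ℕ} (G : DepRandomGraph n p d) (ω : G.Ω) :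
    SimpleGraph (Fin n) :=
  SimpleGraph.fromEdgeSet {e : Sym2 (Fin n) | ∃ h : ¬ e.IsDiag, G.X ⟨e, h⟩ ω = true}

noncomputable def DepRandomGraph.deg {n : ℕ} {p : ℝ} {d : ℕ} (G : DepRandomGraph n p d)
    (ω : G.Ω) (v : Fin n) : ℕ :=
  {u | (G.graph ω).Adj v u}.ncard

noncomputable def DepRandomGraph.eAB {n : ℕ} {p : ℝ} {d : ℕ} (G : DepRandomGraph n p d)
    (ω : G.Ω) (A B : Finset (Fin n)) : ℕ :=
  {q : Fin n × Fin n | q.1 ∈ A ∧ q.2 ∈ B ∧ (G.graph ω).Adj q.1 q.2}.ncard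

def ContainsCopy {n : ℕ} {α : Type*} (G' : SimpleGraph (Fin n)) (H : SimpleGraph α) : Prop :=
  ∃ f : α → Fin n, Function.Injective f ∧ ∀ u v, H.Adj u v → G'.Adj (f u) (f v)

/-- The number of vertices covered by a finite set of edges. -/
noncomputable def edgeVertCount {α : Type*} (Γ : Finset (Sym2 α)) : ℕ :=
  {v : α | ∃ e ∈ Γ, v ∈ e}.ncard

/-- The edge cover number of a finite set of edges: the minimum size of a subset `A ⊆ Γ`
such that every edge of `Γ` shares an endpoint with some edge of `A`. -/
noncomputable def coverNum {α : Type*} (Γ : Finset (Sym2 α)) : ℕ :=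
  sInf {k : ℕ | ∃ A ⊆ Γ, A.card = k ∧ ∀ e ∈ Γ, ∃ a ∈ A, ∃ v : α, v ∈ e ∧ v ∈ a}

/-! If `G` is disconnected, some vertex set `A` with `1 ≤ |A| ≤ n / 2` has none of its
`|A| (n - |A|)` crossing edges present. Greedily, at least `⌈|A| (n - |A|) / (d + 1)⌉` of these
edges are pairwise non-adjacent in the dependency graph, so the events that they are absent are
mutually independent, each of probability `1 - p`. A union bound over `A` finishes the proof. -/

open Finset

namespace SimpleGraph

variable {V : Type*} (D : SimpleGraph V)

lemma exists_isIndepSet_dominating (E : Finset V) :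
    ∃ S ⊆ E, D.IsIndepSet (S : Set V) ∧ ∀ e ∈ E, ∃ s ∈ S, e = s ∨ D.Adj s e := by
  classical
  obtain ⟨S, hS, hmax⟩ := (E.powerset.filter fun S : Finset V => D.IsIndepSet (S : Set V))
    |>.exists_max_image card ⟨∅, by simp [IsIndepSet]⟩
  rw [mem_filter, mem_powerset] at hS
  refine ⟨S, hS.1, hS.2, fun e he => ?_⟩
  by_contra! h
  have heS : e ∉ S := fun he' => (h e he').1 rfl
  have hindep : D.IsIndepSet (insert e S : Set V) :=
    Set.pairwise_insert.2 ⟨hS.2, fun s hs _ => ⟨(h s hs).2 ∘ D.adj_symm, (h s hs).2⟩⟩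
  have := hmax (insert e S) (by simpa [insert_subset_iff, he, hS.1] using hindep)
  rw [card_insert_of_notMem heS] at this
  omega

lemma exists_isIndepSet_subset_card_le_mul [Fintype V] [DecidableRel D.Adj] {d : ℕ}
    (hdeg : ∀ v, D.degree v ≤ d) (E : Finset V) :
    ∃ S ⊆ E, D.IsIndepSet (S : Set V) ∧ #E ≤ #S * (d + 1) := by
  classical
  obtain ⟨S, hSE, hS, hdom⟩ := D.exists_isIndepSet_dominating E
  refine ⟨S, hSE, hS, ?_⟩
  calc #E ≤ #(S.biUnion fun s => insert s (D.neighborFinset s)) :=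
        card_le_card fun e he => by
          obtain ⟨s, hs, hes⟩ := hdom e he
          simpa only [mem_biUnion, mem_insert, mem_neighborFinset] using ⟨s, hs, hes⟩
    _ ≤ ∑ s ∈ S, #(insert s (D.neighborFinset s)) := card_biUnion_le
    _ ≤ ∑ _s ∈ S, (d + 1) := sum_le_sum fun s _ =>
        (card_insert_le _ _).trans <| by
          rw [card_neighborFinset_eq_degree]; exact Nat.succ_le_succ (hdeg s)
    _ = #S * (d + 1) := by rw [sum_const, smul_eq_mul]

lemma exists_small_isolated_of_not_connected [Fintype V] [Nonempty V] (h : ¬ D.Connected) :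
    ∃ A : Finset V, A.Nonempty ∧ 2 * #A ≤ Fintype.card V ∧
      ∀ u ∈ A, ∀ v ∉ A, ¬ D.Adj u v := by
  classical
  obtain ⟨v₀⟩ := ‹Nonempty V›
  set A := univ.filter (D.Reachable v₀)
  have hA : ∀ u ∈ A, ∀ v ∉ A, ¬ D.Adj u v := fun u hu v hv hadj =>
    hv (by simpa [A] using (mem_filter.1 hu).2.trans hadj.reachable)
  have hAc : ∀ u ∈ Aᶜ, ∀ v ∉ Aᶜ, ¬ D.Adj u v := fun u hu v hv hadj =>
    hA v (by simpa using hv) u (mem_compl.1 hu) hadj.symm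
  have hAne : A.Nonempty := ⟨v₀, by simp [A]⟩
  obtain ⟨w, hw⟩ :=
    not_forall.1 (not_exists.1 (mt D.connected_iff_exists_forall_reachable.2 h) v₀)
  have hAcne : Aᶜ.Nonempty := ⟨w, by simpa [A] using hw⟩
  have hcard := card_compl A
  have hle := card_le_univ A
  rcases le_total (2 * #A) (Fintype.card V) with hsmall | hlarge
  · exact ⟨A, hAne, hsmall, hA⟩
  · exact ⟨Aᶜ, hAcne, by omega, hAc⟩

end SimpleGraph

def crossingEdges {n : ℕ} (A : Finset (Fin n)) : Finset (EdgeIdx n) :=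
  ((A ×ˢ Aᶜ).image fun q => s(q.1, q.2)).subtype fun e => ¬ e.IsDiag

lemma mem_crossingEdges {n : ℕ} {A : Finset (Fin n)} {e : EdgeIdx n} :
    e ∈ crossingEdges A ↔ ∃ u ∈ A, ∃ v ∉ A, s(u, v) = e.1 := by
  simp [crossingEdges, and_assoc]

lemma card_crossingEdges {n : ℕ} (A : Finset (Fin n)) : #(crossingEdges A) = #A * (n - #A) := by
  have hoff : ∀ q ∈ (A ×ˢ Aᶜ).image fun q => s(q.1, q.2), ¬ q.IsDiag := by
    simp only [mem_image, mem_product, mem_compl]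
    rintro _ ⟨⟨u, v⟩, ⟨hu, hv⟩, rfl⟩ huv
    exact hv (Sym2.mk_isDiag_iff.1 huv ▸ hu)
  have hinj : Set.InjOn (fun q : Fin n × Fin n => s(q.1, q.2)) (A ×ˢ Aᶜ : Set _) := by
    rintro ⟨u, v⟩ ⟨hu, hv⟩ ⟨u', v'⟩ ⟨hu', hv'⟩ h
    rcases Sym2.eq_iff.1 h with ⟨rfl, rfl⟩ | ⟨rfl, rfl⟩
    · rfl
    · exact absurd hu (by simpa using hv')
  rw [crossingEdges, card_subtype, filter_true_of_mem hoff,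
    card_image_of_injOn (by simpa using hinj), card_product, card_compl, Fintype.card_fin]

namespace DepRandomGraph

variable {n : ℕ} {p : ℝ} {d : ℕ} (G : DepRandomGraph n p d)

def noEdgeAcross (A : Finset (Fin n)) : Set G.Ω :=
  {ω | ∀ u ∈ A, ∀ v ∉ A, ¬ (G.graph ω).Adj u v}

lemma measurableSet_comap_X_eq (e : EdgeIdx n) (b : Bool) :
    MeasurableSet[MeasurableSpace.comap (G.X e) ⊤] {ω | G.X e ω = b} :=
  ⟨{b}, trivial, rfl⟩

lemma D_degree_le [DecidableRel G.D.Adj] (e : EdgeIdx n) : G.D.degree e ≤ d := by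
  rw [← SimpleGraph.card_neighborFinset_eq_degree, SimpleGraph.neighborFinset,
    ← Set.ncard_eq_toFinset_card']
  exact G.degBound e

lemma graph_adj_of_X_eq_true {ω : G.Ω} {e : EdgeIdx n} {u v : Fin n} (he : s(u, v) = e.1)
    (hX : G.X e ω = true) : (G.graph ω).Adj u v := by
  obtain ⟨e, hdiag⟩ := e
  subst he
  exact (SimpleGraph.fromEdgeSet_adj _).2
    ⟨⟨hdiag, hX⟩, fun huv => hdiag (huv ▸ Sym2.mk_isDiag_iff.2 rfl)⟩

lemma p_le_one (G : DepRandomGraph n p d) (hn : 2 ≤ n) : p ≤ 1 := by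
  have hdiag : ¬ (s(⟨0, by omega⟩, ⟨1, by omega⟩) : Sym2 (Fin n)).IsDiag := by
    simp [Fin.ext_iff]
  have := G.probX ⟨_, hdiag⟩ ▸ prob_le_one (μ := G.μ)
  exact ENNReal.ofReal_le_one.1 this

lemma measure_X_eq_false_le (e : EdgeIdx n) :
    G.μ {ω | G.X e ω = false} ≤ ENNReal.ofReal (1 - p) := by
  have hcompl : {ω | G.X e ω = false} = {ω | G.X e ω = true}ᶜ := by
    ext ω; simp
  have hmeas : MeasurableSet {ω | G.X e ω = true} :=
    (G.meas e).comap_le _ (G.measurableSet_comap_X_eq e true)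
  rw [hcompl, prob_compl_eq_one_sub hmeas, G.probX e, tsub_le_iff_right]
  calc 1 = ENNReal.ofReal (1 - p + p) := by simp
    _ ≤ ENNReal.ofReal (1 - p) + ENNReal.ofReal p := ENNReal.ofReal_add_le

lemma measure_iInter_X_eq_false_of_isIndepSet {S : Finset (EdgeIdx n)}
    (hS : G.D.IsIndepSet (S : Set (EdgeIdx n))) :
    G.μ (⋂ e ∈ S, {ω | G.X e ω = false}) = ∏ e ∈ S, G.μ {ω | G.X e ω = false} := by
  classical
  induction S using Finset.induction with
  | empty => simp
  | @insert e S heS ih =>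
    rw [coe_insert] at hS
    have hfar : ∀ f ∈ S, f ≠ e ∧ ¬ G.D.Adj e f := fun f hf =>
      have hne : e ≠ f := fun h => heS (h ▸ hf)
      ⟨hne.symm, hS (Set.mem_insert _ _) (Set.mem_insert_of_mem _ hf) hne⟩
    have hrest : MeasurableSet[⨆ f ∈ {f | f ≠ e ∧ ¬ G.D.Adj e f},
        MeasurableSpace.comap (G.X f) ⊤] (⋂ f ∈ S, {ω | G.X f ω = false}) :=
      MeasurableSet.biInter S.countable_toSet fun f hf =>
        le_iSup₂ (f := fun g (_ : g ∈ {f | f ≠ e ∧ ¬ G.D.Adj e f}) =>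
          MeasurableSpace.comap (G.X g) ⊤) f (hfar f hf) _ (G.measurableSet_comap_X_eq f false)
    have hsplit := ((G.indep e).indepSet_of_measurableSet
      (G.measurableSet_comap_X_eq e false) hrest).measure_inter_eq_mul
    rw [← Finset.set_biInter_coe, coe_insert, Set.biInter_insert, Finset.set_biInter_coe, hsplit,
      ih (hS.mono (Set.subset_insert _ _)), prod_insert heS]

lemma measure_noEdgeAcross_le (hp : p ≤ 1) (A : Finset (Fin n)) :
    G.μ (G.noEdgeAcross A) ≤
      ENNReal.ofReal ((1 - p) ^ ⌈((#A * (n - #A) : ℕ) : ℝ) / ((d : ℝ) + 1)⌉₊) := by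
  classical
  set t := ⌈((#A * (n - #A) : ℕ) : ℝ) / ((d : ℝ) + 1)⌉₊
  obtain ⟨S, hSE, hS, hcard⟩ :=
    G.D.exists_isIndepSet_subset_card_le_mul G.D_degree_le (crossingEdges A)
  have ht : t ≤ #S := by
    rw [Nat.ceil_le, div_le_iff₀ (by positivity)]
    exact_mod_cast card_crossingEdges A ▸ hcard
  -- Keep exactly `t` edges: for `p < 0` the factor `ofReal (1 - p)` exceeds `1`.
  obtain ⟨S', hS'S, hS'card⟩ := exists_subset_card_eq ht
  have hsub : G.noEdgeAcross A ⊆ ⋂ e ∈ S', {ω | G.X e ω = false} := by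
    refine fun ω hω => Set.mem_iInter₂.2 fun e he => Bool.eq_false_iff.2 fun hX => ?_
    obtain ⟨u, hu, v, hv, huv⟩ := mem_crossingEdges.1 (hSE (hS'S he))
    exact hω u hu v hv (G.graph_adj_of_X_eq_true huv hX)
  calc G.μ (G.noEdgeAcross A) ≤ G.μ (⋂ e ∈ S', {ω | G.X e ω = false}) := measure_mono hsub
    _ = ∏ e ∈ S', G.μ {ω | G.X e ω = false} :=
        G.measure_iInter_X_eq_false_of_isIndepSet (hS.mono (by exact_mod_cast hS'S))
    _ ≤ ∏ _e ∈ S', ENNReal.ofReal (1 - p) :=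
        prod_le_prod' fun e _ => G.measure_X_eq_false_le e
    _ = ENNReal.ofReal ((1 - p) ^ t) := by
        rw [prod_const, hS'card, ENNReal.ofReal_pow (by linarith)]

end DepRandomGraph

/-- **Quantitative connectivity bound.** For any `d`-dependent random graph distribution on
`n ≥ 2` vertices, the probability that the graph is not connected is at most
`Σ_{a=1}^{⌊n/2⌋} C(n,a) (1−p)^⌈a(n−a)/(d+1)⌉`. -/
theorem not_connected_bound {n : ℕ} (hn : 2 ≤ n) {p : ℝ} {d : ℕ} (G : DepRandomGraph n p d) :
    G.μ {ω | ¬ (G.graph ω).Connected} ≤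
      ENNReal.ofReal (∑ a ∈ Finset.Icc 1 (n / 2),
        (n.choose a : ℝ) * (1 - p) ^ ⌈((a * (n - a) : ℕ) : ℝ) / ((d : ℝ) + 1)⌉₊) := by
  classical
  have hp := G.p_le_one hn
  have : Nonempty (Fin n) := ⟨⟨0, by omega⟩⟩
  have hcover : {ω | ¬ (G.graph ω).Connected} ⊆
      ⋃ a ∈ Icc 1 (n / 2), ⋃ A ∈ powersetCard a (univ : Finset (Fin n)),
        G.noEdgeAcross A := by
    intro ω hω
    obtain ⟨A, hA, hsmall, hcut⟩ := (G.graph ω).exists_small_isolated_of_not_connected hω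
    simp only [Set.mem_iUnion, mem_Icc, mem_powersetCard, exists_prop]
    refine ⟨#A, ⟨hA.card_pos, ?_⟩, A, ⟨subset_univ A, rfl⟩, hcut⟩
    rw [Fintype.card_fin] at hsmall
    omega
  calc G.μ {ω | ¬ (G.graph ω).Connected}
      ≤ ∑ a ∈ Icc 1 (n / 2), ∑ A ∈ powersetCard a (univ : Finset (Fin n)),
          G.μ (G.noEdgeAcross A) :=
        (measure_mono hcover).trans <| (measure_biUnion_finset_le _ _).trans <|
          sum_le_sum fun a _ => measure_biUnion_finset_le _ _
    _ ≤ ∑ a ∈ Icc 1 (n / 2), ∑ _A ∈ powersetCard a (univ : Finset (Fin n)),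
          ENNReal.ofReal ((1 - p) ^ ⌈((a * (n - a) : ℕ) : ℝ) / ((d : ℝ) + 1)⌉₊) :=
        sum_le_sum fun a _ => sum_le_sum fun A hA =>
          (mem_powersetCard.1 hA).2 ▸ G.measure_noEdgeAcross_le hp A
    _ = _ := by
        have h1p : 0 ≤ 1 - p := by linarith
        rw [ENNReal.ofReal_sum_of_nonneg fun a _ => by positivity]
        simp_rw [sum_const, card_powersetCard, card_univ, Fintype.card_fin, nsmul_eq_mul,
          ENNReal.ofReal_mul (Nat.cast_nonneg _), ENNReal.ofReal_natCast]
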